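/- For all b, c ∈ k, the right Λ-module M(1,b,c)* = Hom_Λ(M(1,b,c), Λ) is isomorphic to M′((ω′)²(1,b,c)), where ω′(a,b,c) = (a, q⁻¹b, −((a+q⁻¹b)/a)·c) (which is defined whenever the first coordinate a is nonzero, hence (ω′)²(1,b,c) is defined for all b,c). In particular, M(1,b,c)* is again a 3-dimensional local right Λ-module; for b = −q one has M(1,−q,c)* ≅ M′(1,−q⁻¹,0) for every c ∈ k, and for b = −q² one has M(1,−q²,c)* ≅ M′(1,−1,0) for every c ∈ k. -/

import Mathlib

open CategoryTheory Limits Opposite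

/-- The algebra `Λ = Λ(q)` of Ringel–Zhang: a `k`-algebra with distinguished elements
`x, y, z` satisfying the defining relations
`x² = y² = z² = 0`, `yz = 0`, `xy + q·yx = 0`, `xz = zx`, `zy = zx`,
and admitting the `k`-basis `{1, x, y, z, yx, zx}`.
Any such algebra is canonically isomorphic to the quotient of the free algebra
`k⟨x,y,z⟩` by the two-sided ideal generated by these relations. -/
structure LambdaAlg (k : Type) [Field k] (q : k) (Λ : Type) [Ring Λ] [Algebra k Λ] :
    Type where
  x : Λ
  y : Λ
  z : Λ
  hxx : x * x = 0
  hyy : y * y = 0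
  hzz : z * z = 0
  hyz : y * z = 0
  hxy : x * y + q • (y * x) = 0
  hxz : x * z - z * x = 0
  hzy : z * y - z * x = 0
  basis : Module.Basis (Fin 6) k Λ
  hb0 : basis 0 = 1
  hb1 : basis 1 = x
  hb2 : basis 2 = y
  hb3 : basis 3 = z
  hb4 : basis 4 = y * x
  hb5 : basis 5 = z * x

namespace LambdaAlg

variable {k : Type} [Field k] {q : k} {Λ : Type} [Ring Λ] [Algebra k Λ]

/-- The element `ax + by + cz` of `Λ`. -/
def w (D : LambdaAlg k q Λ) (a b c : k) : Λ := a • D.x + b • D.y + c • D.z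

/-- The left ideal `U(a,b,c) = Λ(ax+by+cz) + Λ·yx + Λ·zx` of `Λ`. -/
def U (D : LambdaAlg k q Λ) (a b c : k) : Submodule Λ Λ :=
  Submodule.span Λ {D.w a b c, D.y * D.x, D.z * D.x}

/-- The left `Λ`-module `M(a,b,c) = Λ/U(a,b,c)`. -/
abbrev M (D : LambdaAlg k q Λ) (a b c : k) : Type := Λ ⧸ D.U a b c

/-- The right ideal `U′(a,b,c) = (ax+by+cz)Λ + yx·Λ + zx·Λ` of `Λ`,
viewed as a `Λᵐᵒᵖ`-submodule of `Λ`. -/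
def U' (D : LambdaAlg k q Λ) (a b c : k) : Submodule Λᵐᵒᵖ Λ :=
  Submodule.span Λᵐᵒᵖ {D.w a b c, D.y * D.x, D.z * D.x}

/-- The right `Λ`-module `M′(a,b,c) = Λ/U′(a,b,c)` (a module over `Λᵐᵒᵖ`). -/
abbrev M' (D : LambdaAlg k q Λ) (a b c : k) : Type := Λ ⧸ D.U' a b c

/-- The `k`-subspace `{m ∈ M : x·m = y·m = z·m = 0}` of a left `Λ`-module `M`;
since `x, y, z` generate `rad Λ` and every simple `Λ`-module is isomorphic to `k`,
this is the socle of `M`. -/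
def ann (D : LambdaAlg k q Λ) (M : Type) [AddCommGroup M] [Module k M] [Module Λ M]
    [IsScalarTower k Λ M] : Submodule k M where
  carrier := {m | D.x • m = 0 ∧ D.y • m = 0 ∧ D.z • m = 0}
  add_mem' := by
    rintro a b ⟨h1, h2, h3⟩ ⟨g1, g2, g3⟩
    simp [smul_add, h1, h2, h3, g1, g2, g3]
  zero_mem' := by simp
  smul_mem' := by
    rintro a m ⟨h1, h2, h3⟩
    refine ⟨?_, ?_, ?_⟩ <;> rw [smul_comm] <;> simp [h1, h2, h3]

/-- The submodule `(rad Λ)·M = x·M + y·M + z·M` of a left `Λ`-module `M`. -/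
def radM (D : LambdaAlg k q Λ) (M : Type) [AddCommGroup M] [Module Λ M] :
    Submodule Λ M :=
  Submodule.span Λ
    (Set.range (fun m : M => D.x • m) ∪ Set.range (fun m : M => D.y • m) ∪
      Set.range (fun m : M => D.z • m))

end LambdaAlg

/-- A module is indecomposable if it is nonzero and is not the direct sum of two
nonzero submodules. -/
def IsIndecomposable (R : Type) [Ring R] (M : Type) [AddCommGroup M] [Module R M] :
    Prop :=
  Nontrivial M ∧
    ∀ N₁ N₂ : Submodule R M, N₁ ⊓ N₂ = ⊥ → N₁ ⊔ N₂ = ⊤ → N₁ = ⊥ ∨ N₂ = ⊥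

/-- A module is torsionless if it admits an injective linear map into a finite free
module. -/
def IsTorsionless (R : Type) [Ring R] (M : Type) [AddCommGroup M] [Module R M] : Prop :=
  ∃ (n : ℕ) (f : M →ₗ[R] (Fin n → R)), Function.Injective f

/-- The canonical evaluation map `M → M** = Hom_{Λᵒᵖ}(Hom_Λ(M, Λ), Λ)`,
sending `m` to `f ↦ f m`. -/
def evalMap (Λ : Type) [Ring Λ] (M : Type) [AddCommGroup M] [Module Λ M] :
    M → ((M →ₗ[Λ] Λ) →ₗ[Λᵐᵒᵖ] Λ) := fun m =>
  { toFun := fun f => f m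
    map_add' := fun _ _ => rfl
    map_smul' := fun _ _ => rfl }

/-- The transformation `ω′(a,b,c) = (a, q⁻¹b, −((a+q⁻¹b)/a)·c)` on triples. -/
def omegaPrime {k : Type} [Field k] (q : k) (t : k × k × k) : k × k × k :=
  (t.1, q⁻¹ * t.2.1, -((t.1 + q⁻¹ * t.2.1) / t.1) * t.2.2)

/-! `f ↦ f 1` identifies `Hom_Λ(Λ/U, Λ)` with the right annihilator of the left ideal `U`.
For `w = ax + by + cz` with `a ≠ 0`, a computation in the basis `1, x, y, z, yx, zx` shows
that `{λ | wλ = 0}` is the right ideal `U′(ω′(a,b,c))`, and this equals `w′Λ` for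
`w′ = w(ω′(a,b,c))` because the socle `⟨yx, zx⟩` already lies in `w′Λ`. As `yx` and `zx`
annihilate `w′`, the right annihilator of `U(a,b,c)` is `w′Λ ≅ Λ/{λ | w′λ = 0}`, which is
`Λ/U′((ω′)²(a,b,c))`, with `k`-basis `w′, yx, zx`. -/

section QuotientDual

variable {R : Type*} [Ring R]

def Submodule.rightAnnihilator (I : Submodule R R) : Submodule Rᵐᵒᵖ R where
  carrier := {μ | ∀ u ∈ I, u * μ = 0}
  add_mem' ha hb u hu := by rw [mul_add, ha u hu, hb u hu, add_zero]
  zero_mem' u _ := mul_zero u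
  smul_mem' a μ h u hu := by
    rw [MulOpposite.smul_eq_mul_unop, ← mul_assoc, h u hu, zero_mul]

theorem Submodule.mem_rightAnnihilator_span {S : Set R} {μ : R} :
    μ ∈ (span R S).rightAnnihilator ↔ ∀ s ∈ S, s * μ = 0 :=
  ⟨fun h s hs => h s (subset_span hs),
    fun h _ hu => (span_le (p := LinearMap.ker (LinearMap.mulRight R μ))).mpr h hu⟩

theorem Submodule.Quotient.mk_eq_smul_mk_one (I : Submodule R R) (a : R) :
    (Submodule.Quotient.mk a : R ⧸ I) = a • Submodule.Quotient.mk 1 := by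
  rw [← Submodule.Quotient.mk_smul, smul_eq_mul, mul_one]

def quotientDualEquiv (I : Submodule R R) :
    (R ⧸ I →ₗ[R] R) ≃ₗ[Rᵐᵒᵖ] I.rightAnnihilator where
  toFun f := ⟨f (Submodule.Quotient.mk 1), fun u hu => by
    rw [← smul_eq_mul, ← map_smul, ← Submodule.Quotient.mk_eq_smul_mk_one,
      (Submodule.Quotient.mk_eq_zero I).mpr hu, map_zero]⟩
  invFun μ := I.liftQ (LinearMap.toSpanSingleton R R μ) fun u hu => μ.2 u hu
  map_add' _ _ := rfl
  map_smul' _ _ := rfl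
  left_inv f := by
    refine Submodule.linearMap_qext I (LinearMap.ext fun a => ?_)
    change a • f (Submodule.Quotient.mk 1) = f (Submodule.Quotient.mk a)
    rw [Submodule.Quotient.mk_eq_smul_mk_one I a, map_smul]
  right_inv μ := Subtype.ext (one_smul R (μ : R))

noncomputable def quotientDualEquivOfRightAnnihilatorEq (I : Submodule R R)
    (J : Submodule Rᵐᵒᵖ R) (v : R)
    (hI : I.rightAnnihilator = LinearMap.range (LinearMap.mulLeft Rᵐᵒᵖ v))
    (hJ : LinearMap.ker (LinearMap.mulLeft Rᵐᵒᵖ v) = J) :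
    (R ⧸ I →ₗ[R] R) ≃ₗ[Rᵐᵒᵖ] R ⧸ J :=
  quotientDualEquiv I ≪≫ₗ LinearEquiv.ofEq _ _ hI ≪≫ₗ
    (LinearMap.quotKerEquivRange _).symm ≪≫ₗ Submodule.quotEquivOfEq _ _ hJ

variable {k : Type*} [Field k] [Algebra k R]

theorem finrank_quotient_dual (I : Submodule R R) :
    Module.finrank k (R ⧸ I →ₗ[R] R) = Module.finrank k I.rightAnnihilator :=
  ((quotientDualEquiv I).restrictScalars k).finrank_eq

end QuotientDual

namespace LambdaAlg

variable {k : Type} [Field k] {q : k} {Λ : Type} [Ring Λ] [Algebra k Λ]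
variable (D : LambdaAlg k q Λ) (a b c : k)

theorem x_mul_y : D.x * D.y = -(q • (D.y * D.x)) := eq_neg_of_add_eq_zero_left D.hxy
theorem x_mul_z : D.x * D.z = D.z * D.x := sub_eq_zero.mp D.hxz
theorem z_mul_y : D.z * D.y = D.z * D.x := sub_eq_zero.mp D.hzy

theorem eq_zero_of_combination_eq_zero {r₀ r₁ r₂ r₃ r₄ r₅ : k}
    (h : r₀ • (1 : Λ) + r₁ • D.x + r₂ • D.y + r₃ • D.z + r₄ • (D.y * D.x)
        + r₅ • (D.z * D.x) = 0) :
    r₀ = 0 ∧ r₁ = 0 ∧ r₂ = 0 ∧ r₃ = 0 ∧ r₄ = 0 ∧ r₅ = 0 := by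
  have hli := Fintype.linearIndependent_iff.mp D.basis.linearIndependent
    ![r₀, r₁, r₂, r₃, r₄, r₅] (by simpa [Fin.sum_univ_six, D.hb0, D.hb1, D.hb2, D.hb3,
      D.hb4, D.hb5] using h)
  exact ⟨hli 0, hli 1, hli 2, hli 3, hli 4, hli 5⟩

theorem eq_basis_repr_combination (μ : Λ) :
    μ = D.basis.repr μ 0 • (1 : Λ) + D.basis.repr μ 1 • D.x + D.basis.repr μ 2 • D.y
      + D.basis.repr μ 3 • D.z + D.basis.repr μ 4 • (D.y * D.x)
      + D.basis.repr μ 5 • (D.z * D.x) := by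
  conv_lhs => rw [← D.basis.sum_repr μ]
  rw [Fin.sum_univ_six, D.hb0, D.hb1, D.hb2, D.hb3, D.hb4, D.hb5]

theorem w_mul_x : D.w a b c * D.x = b • (D.y * D.x) + c • (D.z * D.x) := by
  simp only [w, add_mul, smul_mul_assoc, D.hxx, smul_zero, zero_add]

theorem w_mul_y : D.w a b c * D.y = -(a * q) • (D.y * D.x) + c • (D.z * D.x) := by
  simp only [w, add_mul, smul_mul_assoc, D.x_mul_y, D.hyy, D.z_mul_y, smul_zero, add_zero,
    smul_neg, smul_smul, neg_smul]

theorem w_mul_z : D.w a b c * D.z = a • (D.z * D.x) := by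
  simp only [w, add_mul, smul_mul_assoc, D.x_mul_z, D.hyz, D.hzz, smul_zero, add_zero]

theorem w_mul_yx : D.w a b c * (D.y * D.x) = 0 := by
  rw [← mul_assoc, w_mul_y]
  simp only [add_mul, smul_mul_assoc, mul_assoc, D.hxx, mul_zero, smul_zero, add_zero]

theorem w_mul_zx : D.w a b c * (D.z * D.x) = 0 := by
  rw [← mul_assoc, w_mul_z, smul_mul_assoc, mul_assoc, D.hxx, mul_zero, smul_zero]

theorem x_mul_w : D.x * D.w a b c = -(b * q) • (D.y * D.x) + c • (D.z * D.x) := by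
  simp only [w, mul_add, mul_smul_comm, D.hxx, D.x_mul_y, D.x_mul_z, smul_zero, zero_add,
    smul_neg, smul_smul, neg_smul]

theorem yx_mul_w : D.y * D.x * D.w a b c = 0 := by
  rw [mul_assoc, x_mul_w]
  simp only [mul_add, mul_smul_comm, ← mul_assoc, D.hyy, D.hyz, zero_mul, smul_zero,
    add_zero]

theorem zx_mul_w : D.z * D.x * D.w a b c = 0 := by
  rw [mul_assoc, x_mul_w]
  simp only [mul_add, mul_smul_comm, ← mul_assoc, D.z_mul_y, D.hzz, zero_mul, smul_zero,
    add_zero]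
  rw [mul_assoc, D.hxx, mul_zero, smul_zero]

theorem w_mul (μ : Λ) :
    D.w a b c * μ = D.basis.repr μ 0 • D.w a b c
      + (D.basis.repr μ 1 * b - a * q * D.basis.repr μ 2) • (D.y * D.x)
      + ((D.basis.repr μ 1 + D.basis.repr μ 2) * c + a * D.basis.repr μ 3) • (D.z * D.x) := by
  conv_lhs => rw [D.eq_basis_repr_combination μ]
  simp only [mul_add, mul_smul_comm, mul_one, w_mul_x, w_mul_y, w_mul_z, w_mul_yx, w_mul_zx,
    smul_zero, add_zero]
  module

theorem combination_mem_U' (α β γ : k) :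
    α • D.w a b c + β • (D.y * D.x) + γ • (D.z * D.x) ∈ D.U' a b c := by
  have hmem : ∀ u ∈ ({D.w a b c, D.y * D.x, D.z * D.x} : Set Λ), ∀ r : k,
      r • u ∈ D.U' a b c :=
    fun u hu r => Submodule.smul_of_tower_mem _ r (Submodule.subset_span hu)
  exact add_mem (add_mem (hmem _ (by simp) α) (hmem _ (by simp) β)) (hmem _ (by simp) γ)

variable {a}

theorem exists_eq_combination_of_w_mul_eq_zero (hq : q ≠ 0) (ha : a ≠ 0) {μ : Λ}
    (h : D.w a b c * μ = 0) :
    ∃ α β γ : k, μ = α • D.w a (q⁻¹ * b) (-((a + q⁻¹ * b) / a) * c)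
      + β • (D.y * D.x) + γ • (D.z * D.x) := by
  have hμ := D.eq_basis_repr_combination μ
  rw [w_mul] at h
  set r := D.basis.repr μ
  obtain ⟨-, h₁, -, -, h₄, h₅⟩ := D.eq_zero_of_combination_eq_zero (r₀ := 0)
    (r₁ := r 0 * a) (r₂ := r 0 * b) (r₃ := r 0 * c) (r₄ := r 1 * b - a * q * r 2)
    (r₅ := (r 1 + r 2) * c + a * r 3) (by rw [← h, w]; module)
  have hr₀ : r 0 = 0 := (mul_eq_zero.mp h₁).resolve_right ha
  refine ⟨r 1 / a, r 4, r 5, ?_⟩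
  rw [hμ, hr₀, w]
  match_scalars <;> field_simp
  · linear_combination -h₄
  · linear_combination a * q * h₅ + c * h₄

theorem w_mul_w_omegaPrime (hq : q ≠ 0) (ha : a ≠ 0) :
    D.w a b c * D.w a (q⁻¹ * b) (-((a + q⁻¹ * b) / a) * c) = 0 := by
  have hw : D.w a (q⁻¹ * b) (-((a + q⁻¹ * b) / a) * c)
      = a • D.x + (q⁻¹ * b) • D.y + (-((a + q⁻¹ * b) / a) * c) • D.z := rfl
  rw [hw]
  simp only [mul_add, mul_smul_comm, w_mul_x, w_mul_y, w_mul_z]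
  match_scalars <;> field_simp <;> ring

theorem yx_mem_range_mulLeft_w (hq : q ≠ 0) (ha : a ≠ 0) :
    D.y * D.x ∈ LinearMap.range (LinearMap.mulLeft Λᵐᵒᵖ (D.w a b c)) := by
  refine ⟨(-(a * q))⁻¹ • (D.y - (c / a) • D.z), ?_⟩
  simp only [LinearMap.mulLeft_apply, mul_smul_comm, mul_sub, w_mul_y, w_mul_z]
  match_scalars
  · field_simp
  · field_simp; ring

theorem zx_mem_range_mulLeft_w (ha : a ≠ 0) :
    D.z * D.x ∈ LinearMap.range (LinearMap.mulLeft Λᵐᵒᵖ (D.w a b c)) := by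
  refine ⟨a⁻¹ • D.z, ?_⟩
  rw [LinearMap.mulLeft_apply, mul_smul_comm, w_mul_z, smul_smul, inv_mul_cancel₀ ha,
    one_smul]

theorem U'_eq_range_mulLeft_w (hq : q ≠ 0) (ha : a ≠ 0) :
    D.U' a b c = LinearMap.range (LinearMap.mulLeft Λᵐᵒᵖ (D.w a b c)) := by
  refine le_antisymm (Submodule.span_le.mpr ?_) ?_
  · rintro _ (rfl | rfl | rfl)
    · exact ⟨1, mul_one _⟩
    · exact D.yx_mem_range_mulLeft_w b c hq ha
    · exact D.zx_mem_range_mulLeft_w b c ha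
  · rintro _ ⟨μ, rfl⟩
    exact (D.U' a b c).smul_mem (MulOpposite.op μ) (Submodule.subset_span (by simp))

theorem ker_mulLeft_w (hq : q ≠ 0) (ha : a ≠ 0) :
    LinearMap.ker (LinearMap.mulLeft Λᵐᵒᵖ (D.w a b c))
      = D.U' a (q⁻¹ * b) (-((a + q⁻¹ * b) / a) * c) := by
  refine le_antisymm (fun μ hμ => ?_) (Submodule.span_le.mpr ?_)
  · obtain ⟨α, β, γ, rfl⟩ := D.exists_eq_combination_of_w_mul_eq_zero b c hq ha hμ
    exact D.combination_mem_U' _ _ _ α β γ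
  · rintro _ (rfl | rfl | rfl)
    · exact D.w_mul_w_omegaPrime b c hq ha
    · exact D.w_mul_yx a b c
    · exact D.w_mul_zx a b c

theorem rightAnnihilator_U (hq : q ≠ 0) (ha : a ≠ 0) :
    (D.U a b c).rightAnnihilator = LinearMap.ker (LinearMap.mulLeft Λᵐᵒᵖ (D.w a b c)) := by
  ext μ
  simp only [U, Submodule.mem_rightAnnihilator_span, Set.mem_insert_iff,
    Set.mem_singleton_iff, forall_eq_or_imp, forall_eq, LinearMap.mem_ker,
    LinearMap.mulLeft_apply]
  refine ⟨fun h => h.1, fun h => ⟨h, ?_⟩⟩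
  have hμ : μ ∈ LinearMap.ker (LinearMap.mulLeft Λᵐᵒᵖ (D.w a b c)) := h
  rw [D.ker_mulLeft_w b c hq ha, D.U'_eq_range_mulLeft_w _ _ hq ha] at hμ
  obtain ⟨ν, rfl⟩ := hμ
  simp only [LinearMap.mulLeft_apply, ← mul_assoc, yx_mul_w, zx_mul_w, zero_mul, and_self]

theorem rightAnnihilator_U_eq_range (hq : q ≠ 0) (ha : a ≠ 0) :
    (D.U a b c).rightAnnihilator = LinearMap.range
      (LinearMap.mulLeft Λᵐᵒᵖ (D.w a (q⁻¹ * b) (-((a + q⁻¹ * b) / a) * c))) := by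
  rw [D.rightAnnihilator_U b c hq ha, D.ker_mulLeft_w b c hq ha,
    D.U'_eq_range_mulLeft_w _ _ hq ha]

theorem nonempty_dual_equiv_M' (hq : q ≠ 0) (ha : a ≠ 0) :
    Nonempty ((D.M a b c →ₗ[Λ] Λ) ≃ₗ[Λᵐᵒᵖ]
      D.M' (omegaPrime q (omegaPrime q (a, b, c))).1
        (omegaPrime q (omegaPrime q (a, b, c))).2.1
        (omegaPrime q (omegaPrime q (a, b, c))).2.2) :=
  ⟨quotientDualEquivOfRightAnnihilatorEq _ _ _ (D.rightAnnihilator_U_eq_range b c hq ha)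
    (D.ker_mulLeft_w _ _ hq ha)⟩

theorem linearIndependent_w_yx_zx (ha : a ≠ 0) :
    LinearIndependent k ![D.w a b c, D.y * D.x, D.z * D.x] := by
  refine Fintype.linearIndependent_iff.mpr fun g hg => ?_
  simp only [Fin.sum_univ_three, Matrix.cons_val_zero, Matrix.cons_val_one, Matrix.cons_val]
    at hg
  obtain ⟨-, h₁, -, -, h₄, h₅⟩ := D.eq_zero_of_combination_eq_zero (r₀ := 0)
    (r₁ := g 0 * a) (r₂ := g 0 * b) (r₃ := g 0 * c) (r₄ := g 1) (r₅ := g 2)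
    (by rw [← hg]; simp only [w]; module)
  intro i
  fin_cases i
  exacts [(mul_eq_zero.mp h₁).resolve_right ha, h₄, h₅]

theorem restrictScalars_range_mulLeft_w (hq : q ≠ 0) (ha : a ≠ 0) :
    (LinearMap.range (LinearMap.mulLeft Λᵐᵒᵖ (D.w a b c))).restrictScalars k
      = Submodule.span k (Set.range ![D.w a b c, D.y * D.x, D.z * D.x]) := by
  refine le_antisymm ?_ (Submodule.span_le.mpr ?_)
  · rintro _ ⟨μ, rfl⟩
    have hmem (i : Fin 3) (r : k) :
        r • ![D.w a b c, D.y * D.x, D.z * D.x] i ∈ Submodule.span k (Set.range _) :=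
      Submodule.smul_mem _ r (Submodule.subset_span ⟨i, rfl⟩)
    rw [LinearMap.mulLeft_apply, w_mul]
    exact add_mem (add_mem (hmem 0 _) (hmem 1 _)) (hmem 2 _)
  · rintro _ ⟨i, rfl⟩
    fin_cases i
    · exact ⟨1, mul_one _⟩
    · exact D.yx_mem_range_mulLeft_w b c hq ha
    · exact D.zx_mem_range_mulLeft_w b c ha

theorem finrank_dual (hq : q ≠ 0) (ha : a ≠ 0) :
    Module.finrank k (D.M a b c →ₗ[Λ] Λ) = 3 := by
  rw [finrank_quotient_dual (k := k) (D.U a b c), D.rightAnnihilator_U_eq_range b c hq ha]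
  change Module.finrank k
    ((LinearMap.range (LinearMap.mulLeft Λᵐᵒᵖ (D.w a _ _))).restrictScalars k) = 3
  rw [D.restrictScalars_range_mulLeft_w _ _ hq ha,
    finrank_span_eq_card (D.linearIndependent_w_yx_zx _ _ ha), Fintype.card_fin]

end LambdaAlg

/-- For all `b, c ∈ k`, the right `Λ`-module `M(1,b,c)* = Hom_Λ(M(1,b,c), Λ)` is
isomorphic to `M′((ω′)²(1,b,c))`; in particular it is 3-dimensional, and
`M(1,−q,c)* ≅ M′(1,−q⁻¹,0)`, `M(1,−q²,c)* ≅ M′(1,−1,0)` for every `c`. -/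
theorem statement18 (k : Type) [Field k] (q : k) (hq : q ≠ 0)
    (Λ : Type) [Ring Λ] [Algebra k Λ] (D : LambdaAlg k q Λ) (b c : k) :
    Nonempty ((D.M 1 b c →ₗ[Λ] Λ) ≃ₗ[Λᵐᵒᵖ]
        D.M' (omegaPrime q (omegaPrime q (1, b, c))).1
          (omegaPrime q (omegaPrime q (1, b, c))).2.1
          (omegaPrime q (omegaPrime q (1, b, c))).2.2)
    ∧ Module.finrank k (D.M 1 b c →ₗ[Λ] Λ) = 3
    ∧ Nonempty ((D.M 1 (-q) c →ₗ[Λ] Λ) ≃ₗ[Λᵐᵒᵖ] D.M' 1 (-q⁻¹) 0)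
    ∧ Nonempty ((D.M 1 (-q ^ 2) c →ₗ[Λ] Λ) ≃ₗ[Λᵐᵒᵖ] D.M' 1 (-1) 0) := by
  have hω₁ : omegaPrime q (omegaPrime q (1, -q, c)) = (1, -q⁻¹, 0) := by
    simp only [omegaPrime, Prod.mk.injEq]
    refine ⟨trivial, by field_simp, by field_simp; ring⟩
  have hω₂ : omegaPrime q (omegaPrime q (1, -q ^ 2, c)) = (1, -1, 0) := by
    simp only [omegaPrime, Prod.mk.injEq]
    refine ⟨trivial, by field_simp, by field_simp; ring⟩
  have h₁ := D.nonempty_dual_equiv_M' (-q) c hq one_ne_zero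
  have h₂ := D.nonempty_dual_equiv_M' (-q ^ 2) c hq one_ne_zero
  rw [hω₁] at h₁
  rw [hω₂] at h₂
  exact ⟨D.nonempty_dual_equiv_M' b c hq one_ne_zero, D.finrank_dual b c hq one_ne_zero, h₁, h₂⟩
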